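/- arXiv:0709.1269 — 2 statements merged into one kernel-verified Lean document; each statement's English description precedes it below -/
import Mathlib

section
/- Let Z be a multiaffine real polynomial in y_1,...,y_m with positive coefficients, and let e,f,g be distinct indices. Fix real values of all variables y_c for c ∉ {e,f,g}. Assume ΔZ_f{e,g} ≥ 0 and ΔZ^f{e,g} ≥ 0 (as functions of y_f and the remaining fixed values being irrelevant, i.e., for the given fixed values), and assume ΔZ{e,f} ≥ 0 for all real y_g. Then ΔZ{e,g} ≥ 0 for all real y_f. -/
open MvPolynomial

/-- The deletion `Z^e`: the polynomial `Z` with `y_e` set to `0`. -/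
noncomputable def del {m : ℕ} (e : Fin m) (Z : MvPolynomial (Fin m) ℝ) : MvPolynomial (Fin m) ℝ :=
  aeval (fun i => if i = e then (0 : MvPolynomial (Fin m) ℝ) else X i) Z

/-- Multiaffine: every variable occurs to at most the first power. -/
def Multiaffine {m : ℕ} (Z : MvPolynomial (Fin m) ℝ) : Prop :=
  ∀ e : Fin m, Z.degreeOf e ≤ 1

/-- The Rayleigh difference `ΔZ{e,f} = Z_e Z_f - Z_{ef} Z`. -/
noncomputable def Ray {m : ℕ} (e f : Fin m) (Z : MvPolynomial (Fin m) ℝ) : MvPolynomial (Fin m) ℝ :=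
  pderiv e Z * pderiv f Z - pderiv f (pderiv e Z) * Z

/-!
For multiaffine `Z` and `e ≠ g`, `ΔZ{e,g} = Z_e^g Z_g^e - Z_{eg} Z^{eg}`, and each of the four
factors is affine in `y_f`. With the other variables fixed, `ΔZ{e,g}` is therefore a quadratic in
`y_f` with leading coefficient `ΔZ_f{e,g}` and constant term `ΔZ^f{e,g}`, and `ΔZ{e,f}` is a
quadratic in `y_g`. Both are built from the same `2 × 2 × 2` array of numbers `∂_S Z^T`
(`S ⊔ T = {e,f,g}`) and have the same discriminant, Cayley's hyperdeterminant of that array.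
Nonnegativity of `ΔZ{e,f}` in `y_g` makes it nonpositive, and a quadratic whose outer
coefficients are nonnegative and whose discriminant is nonpositive is nonnegative.
-/

section Quadratic

variable {K : Type*} [Field K] [LinearOrder K] [IsStrictOrderedRing K]

theorem quadratic_nonneg_of_discrim_nonpos {a b c : K} (ha : 0 ≤ a) (hc : 0 ≤ c)
    (hd : discrim a b c ≤ 0) (x : K) : 0 ≤ a * (x * x) + b * x + c := by
  rw [discrim] at hd
  rcases ha.eq_or_lt with rfl | ha
  · obtain rfl : b = 0 := by nlinarith [sq_nonneg b]
    simpa using hc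
  · nlinarith [sq_nonneg (2 * a * x + b)]

theorem det_affine_nonneg {a₀ a₁ b₀ b₁ c₀ c₁ d₀ d₁ : K}
    (h₁ : 0 ≤ b₁ * c₁ - d₁ * a₁) (h₀ : 0 ≤ b₀ * c₀ - d₀ * a₀)
    (h : ∀ t, 0 ≤ (t * d₀ + b₀) * (t * c₁ + a₁) - (t * d₁ + b₁) * (t * c₀ + a₀)) (s : K) :
    0 ≤ (s * b₁ + b₀) * (s * c₁ + c₀) - (s * d₁ + d₀) * (s * a₁ + a₀) := by
  have hd : discrim (d₀ * c₁ - d₁ * c₀) (d₀ * a₁ + b₀ * c₁ - d₁ * a₀ - b₁ * c₀)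
      (b₀ * a₁ - b₁ * a₀) ≤ 0 :=
    discrim_le_zero fun t => by linarith [h t]
  -- both discriminants equal the hyperdeterminant of the `2 × 2 × 2` array of the eight numbers
  have hd' : discrim (b₁ * c₁ - d₁ * a₁) (b₁ * c₀ + b₀ * c₁ - d₁ * a₀ - d₀ * a₁)
      (b₀ * c₀ - d₀ * a₀) ≤ 0 := by
    unfold discrim at hd ⊢
    linarith
  linarith [quadratic_nonneg_of_discrim_nonpos h₁ h₀ hd' s]

end Quadratic

theorem MvPolynomial.pderiv_comm {σ R : Type*} [CommSemiring R] (i j : σ) (p : MvPolynomial σ R) :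
    pderiv i (pderiv j p) = pderiv j (pderiv i p) := by
  classical
  induction p using MvPolynomial.induction_on with
  | C a => simp
  | add p q hp hq => simp [hp, hq]
  | mul_X p n ih =>
    simp only [Derivation.leibniz, pderiv_X, smul_eq_mul, map_add, ih, Pi.single_apply]
    split_ifs <;> simp only [map_zero, mul_one, mul_zero, pderiv_one] <;> ring

section Multiaffine

variable {m : ℕ}

theorem del_monomial (e : Fin m) (s : Fin m →₀ ℕ) (a : ℝ) :
    del e (monomial s a) = if s e = 0 then monomial s a else 0 := by
  rw [del, aeval_monomial, monomial_eq, algebraMap_eq, Finsupp.prod, Finsupp.prod]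
  split_ifs with h
  · congr 1
    refine Finset.prod_congr rfl fun i hi => ?_
    rw [if_neg (ne_of_mem_of_not_mem hi (by simpa using h))]
  · rw [Finset.prod_eq_zero (Finsupp.mem_support_iff.mpr h) (by simp [h]), mul_zero]

theorem coeff_del (e : Fin m) (Z : MvPolynomial (Fin m) ℝ) (d : Fin m →₀ ℕ) :
    coeff d (del e Z) = if d e = 0 then coeff d Z else 0 := by
  induction Z using MvPolynomial.induction_on' with
  | monomial s a =>
    rw [del_monomial]
    rcases eq_or_ne s d with rfl | hsd <;> split_ifs <;> simp_all [coeff_monomial]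
  | add p q hp hq =>
    rw [del, map_add, coeff_add, ← del, ← del, hp, hq, coeff_add]
    split_ifs <;> simp

theorem eval_del (e : Fin m) (Z : MvPolynomial (Fin m) ℝ) (v : Fin m → ℝ) :
    eval v (del e Z) = eval (Function.update v e 0) Z := by
  rw [del, aeval_eq_bind₁, eval, eval₂Hom_bind₁]
  refine congrArg (eval · Z) (funext fun i => ?_)
  rcases eq_or_ne i e with rfl | h <;> simp [*]

theorem del_comm (e f : Fin m) (Z : MvPolynomial (Fin m) ℝ) :
    del e (del f Z) = del f (del e Z) := by
  ext d
  simp only [coeff_del]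
  split_ifs <;> rfl

theorem pderiv_del {e f : Fin m} (h : e ≠ f) (Z : MvPolynomial (Fin m) ℝ) :
    pderiv e (del f Z) = del f (pderiv e Z) := by
  ext d
  simp [coeff_del, coeff_pderiv, h]

theorem multiaffine_pderiv {Z : MvPolynomial (Fin m) ℝ} (hZ : Multiaffine Z) (e : Fin m) :
    Multiaffine (pderiv e Z) := fun i => degreeOf_le_iff.mpr fun d hd => by
  rw [mem_support_iff, coeff_pderiv] at hd
  have := degreeOf_le_iff.mp (hZ i) _ (mem_support_iff.mpr (left_ne_zero_of_mul hd))
  simp only [Finsupp.add_apply] at this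
  omega

theorem multiaffine_del {Z : MvPolynomial (Fin m) ℝ} (hZ : Multiaffine Z) (e : Fin m) :
    Multiaffine (del e Z) := fun i => degreeOf_le_iff.mpr fun d hd => by
  rw [mem_support_iff, coeff_del] at hd
  split_ifs at hd
  · exact degreeOf_le_iff.mp (hZ i) _ (mem_support_iff.mpr hd)
  · exact (hd rfl).elim

theorem X_mul_pderiv_add_del {Z : MvPolynomial (Fin m) ℝ} {e : Fin m} (h : Z.degreeOf e ≤ 1) :
    X e * pderiv e Z + del e Z = Z := by
  classical
  ext d
  simp only [coeff_add, coeff_X_mul', coeff_del, Finsupp.mem_support_iff]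
  split_ifs with hd hd'
  · rw [coeff_pderiv, add_zero, Finsupp.sub_add_single_one_cancel hd]
    rcases eq_or_ne (coeff d Z) 0 with hc | hc
    · rw [hc, zero_mul]
    · have : d e ≤ 1 := degreeOf_le_iff.mp h d (mem_support_iff.mpr hc)
      simp [show d e = 1 by omega]
  · rw [zero_add]
  · exact (hd hd').elim

theorem del_pderiv_self {Z : MvPolynomial (Fin m) ℝ} {e : Fin m} (h : Z.degreeOf e ≤ 1) :
    del e (pderiv e Z) = pderiv e Z := by
  ext d
  rw [coeff_del, coeff_pderiv]
  split_ifs with hd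
  · rfl
  · have : coeff (d + Finsupp.single e 1) Z = 0 := by
      by_contra hc
      have := degreeOf_le_iff.mp h _ (mem_support_iff.mpr hc)
      simp only [Finsupp.add_apply, Finsupp.single_eq_same] at this
      omega
    rw [this, zero_mul]

theorem Multiaffine.eval_update {Z : MvPolynomial (Fin m) ℝ} (hZ : Multiaffine Z) (e : Fin m)
    (v : Fin m → ℝ) (s : ℝ) :
    eval (Function.update v e s) Z = s * eval v (pderiv e Z) + eval v (del e Z) := by
  conv_lhs => rw [← X_mul_pderiv_add_del (hZ e)]
  rw [← del_pderiv_self (hZ e)]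
  simp [eval_del]

theorem ray_eq {P : MvPolynomial (Fin m) ℝ} (hP : Multiaffine P) {e g : Fin m} (h : e ≠ g) :
    Ray e g P =
      del g (pderiv e P) * pderiv g (del e P) - pderiv g (pderiv e P) * del g (del e P) := by
  have hP' := X_mul_pderiv_add_del (hP e)
  have hPe := X_mul_pderiv_add_del (multiaffine_pderiv hP e g)
  have hdelP := X_mul_pderiv_add_del (multiaffine_del hP e g)
  have hPg : pderiv g P = X e * pderiv g (pderiv e P) + pderiv g (del e P) := by
    conv_lhs => rw [← hP']
    simp [pderiv_X_of_ne h]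
  rw [Ray, hPg]
  linear_combination pderiv g (pderiv e P) * hP' - pderiv g (del e P) * hPe
    + pderiv g (pderiv e P) * hdelP

end Multiaffine

theorem lemma_two_general {m : ℕ} (Z : MvPolynomial (Fin m) ℝ)
    (hZ : Multiaffine Z)
    (e f g : Fin m) (hef : e ≠ f) (heg : e ≠ g) (hfg : f ≠ g)
    (x : Fin m → ℝ)
    (hA : 0 ≤ eval x (Ray e g (pderiv f Z)))
    (hC : 0 ≤ eval x (Ray e g (del f Z)))
    (hef' : ∀ t : ℝ, 0 ≤ eval (Function.update x g t) (Ray e f Z)) :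
    ∀ s : ℝ, 0 ≤ eval (Function.update x f s) (Ray e g Z) := by
  intro s
  simp (maxDischargeDepth := 4) only [ray_eq, Multiaffine.eval_update, hZ, multiaffine_pderiv,
    multiaffine_del, hef, heg, ne_eq, not_false_eq_true, map_sub, map_mul] at hA hC hef' ⊢
  -- bring the eight words `∂_S Z^T` in `e, f, g` to a common normal form
  simp only [pderiv_comm, del_comm, pderiv_del hef, pderiv_del hfg, pderiv_del hef.symm,
    pderiv_del heg.symm, pderiv_del hfg.symm] at hA hC hef' ⊢
  exact det_affine_nonneg hA hC hef' s

theorem lemma_two {m : ℕ} (Z : MvPolynomial (Fin m) ℝ)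
    (hZ : Multiaffine Z)
    (hpos : ∀ d, Z.coeff d ≠ 0 → 0 < Z.coeff d)
    (e f g : Fin m) (hef : e ≠ f) (heg : e ≠ g) (hfg : f ≠ g)
    (x : Fin m → ℝ)
    (hA : 0 ≤ eval x (Ray e g (pderiv f Z)))
    (hC : 0 ≤ eval x (Ray e g (del f Z)))
    (hef' : ∀ t : ℝ, 0 ≤ eval (Function.update x g t) (Ray e f Z)) :
    ∀ s : ℝ, 0 ≤ eval (Function.update x f s) (Ray e g Z) :=
  lemma_two_general Z hZ e f g hef heg hfg x hA hC hef'
end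

section
/- Let Z(y_1,...,y_m) be a multiaffine real polynomial that is stable. Then Z has the strong Rayleigh property: for all distinct indices e,f and all real y ∈ ℝ^m, Z_e(y) Z_f(y) − Z_{ef}(y) Z(y) ≥ 0. -/
open MvPolynomial

/-- A real polynomial is stable if it does not vanish when all variables lie in the
open upper half-plane. -/
def Stable {m : ℕ} (Z : MvPolynomial (Fin m) ℝ) : Prop :=
  ∀ y : Fin m → ℂ, (∀ e, 0 < (y e).im) →
    eval y (MvPolynomial.map (algebraMap ℝ ℂ) Z) ≠ 0

/-! Write `Z = P + y_f Q` with `P = Z^f` and `Q = Z_f` free of `y_f`. When the other coordinates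
lie in the upper half-plane and `Q ≠ 0`, stability keeps the root `y_f = -P/Q` out of the upper
half-plane, i.e. `Im (P Q̄) ≥ 0`; by continuity this persists on the closed half-plane. At real `y`
with `y_e` replaced by `i` we get `P = p₀ + i p₁`, `Q = q₀ + i q₁`, and
`Im (P Q̄) = p₁ q₀ - p₀ q₁`, which is exactly `Z_e Z_f - Z_{ef} Z` at `y`. -/

namespace MvPolynomial

section Derivative

variable {σ R : Type*} [CommSemiring R]

theorem coeff_X_mul_pderiv (e : σ) (P : MvPolynomial σ R) (s : σ →₀ ℕ) :
    coeff s (X e * pderiv e P) = s e * coeff s P := by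
  classical
  induction P using MvPolynomial.induction_on' with
  | add p q hp hq => rw [map_add, mul_add, coeff_add, coeff_add, hp, hq, mul_add]
  | monomial t c =>
    rw [X_mul_pderiv_monomial, coeff_smul, coeff_monomial]
    split_ifs with h
    · rw [h, nsmul_eq_mul]
    · simp

theorem degreeOf_pderiv_le (i e : σ) (P : MvPolynomial σ R) :
    (pderiv e P).degreeOf i ≤ P.degreeOf i := by
  classical
  refine degreeOf_le_iff.mpr fun s hs => ?_
  rw [mem_support_iff, coeff_pderiv] at hs
  calc s i ≤ (s + Finsupp.single e 1 : σ →₀ ℕ) i := by simp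
    _ ≤ P.degreeOf i := monomial_le_degreeOf i (mem_support_iff.mpr (left_ne_zero_of_mul hs))

theorem degreeOf_pderiv_self_eq_zero {e : σ} {P : MvPolynomial σ R} (h : P.degreeOf e ≤ 1) :
    (pderiv e P).degreeOf e = 0 := by
  classical
  refine Nat.le_zero.mp (degreeOf_le_iff.mpr fun s hs => ?_)
  rw [mem_support_iff, coeff_pderiv] at hs
  simpa using (monomial_le_degreeOf e (mem_support_iff.mpr (left_ne_zero_of_mul hs))).trans h

theorem pderiv_eq_zero_of_degreeOf_eq_zero {e : σ} {P : MvPolynomial σ R} (h : P.degreeOf e = 0) :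
    pderiv e P = 0 :=
  pderiv_eq_zero_of_notMem_vars fun he => mem_vars_iff_degreeOf_ne_zero.mp he h

theorem aeval_update_of_degreeOf_eq_zero {S : Type*} [CommSemiring S] [Algebra R S] [DecidableEq σ]
    {e : σ} {P : MvPolynomial σ R} (h : P.degreeOf e = 0) (y : σ → S) (t : S) :
    aeval (Function.update y e t) P = aeval y P := by
  rw [aeval_def, aeval_def]
  refine eval₂_congr _ _ _ fun {i} {s} hi hs => Function.update_of_ne ?_ t y
  rintro rfl
  exact Finsupp.mem_support_iff.mp hi
    (Nat.le_zero.mp (h ▸ monomial_le_degreeOf i (mem_support_iff.mpr hs)))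

end Derivative

section Deletion

variable {m : ℕ}

theorem coeff_del (e : Fin m) (P : MvPolynomial (Fin m) ℝ) (s : Fin m →₀ ℕ) :
    coeff s (del e P) = if s e = 0 then coeff s P else 0 := by
  classical
  induction P using MvPolynomial.induction_on' with
  | add p q hp hq =>
    rw [del, map_add, coeff_add, ← del, ← del, hp, hq]
    split_ifs <;> simp
  | monomial t c =>
    rw [del, aeval_monomial, coeff_monomial]
    by_cases ht : t e = 0
    · have : (t.prod fun i k => (if i = e then (0 : MvPolynomial (Fin m) ℝ) else X i) ^ k) =
          t.prod fun i k => X i ^ k :=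
        Finsupp.prod_congr fun i hi => by
          rw [if_neg (by rintro rfl; exact Finsupp.mem_support_iff.mp hi ht)]
      rw [algebraMap_eq, this, ← monomial_eq, coeff_monomial]
      split_ifs with h1 h2 <;> simp_all
    · rw [Finsupp.prod, Finset.prod_eq_zero (Finsupp.mem_support_iff.mpr ht) (by simp [ht])]
      split_ifs <;> simp_all

theorem mem_support_del_iff {e : Fin m} {P : MvPolynomial (Fin m) ℝ} {s : Fin m →₀ ℕ} :
    s ∈ (del e P).support ↔ s ∈ P.support ∧ s e = 0 := by
  rw [mem_support_iff, mem_support_iff, coeff_del]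
  split_ifs with h <;> simp [h]

theorem degreeOf_del_le (i e : Fin m) (P : MvPolynomial (Fin m) ℝ) :
    (del e P).degreeOf i ≤ P.degreeOf i :=
  degreeOf_le_iff.mpr fun _ hs => monomial_le_degreeOf i (mem_support_del_iff.mp hs).1

theorem degreeOf_del_self (e : Fin m) (P : MvPolynomial (Fin m) ℝ) : (del e P).degreeOf e = 0 :=
  Nat.le_zero.mp (degreeOf_le_iff.mpr fun _ hs => (mem_support_del_iff.mp hs).2.le)

theorem del_add_X_mul_pderiv {e : Fin m} {P : MvPolynomial (Fin m) ℝ} (h : P.degreeOf e ≤ 1) :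
    del e P + X e * pderiv e P = P := by
  ext s
  rw [coeff_add, coeff_del, coeff_X_mul_pderiv]
  rcases Nat.lt_or_ge (s e) 2 with hs | hs
  · interval_cases hse : s e <;> simp
  · have : s ∉ P.support := fun hP => by linarith [(monomial_le_degreeOf e hP).trans h]
    simp [notMem_support_iff.mp this]

theorem aeval_update_of_degreeOf_le_one {S : Type*} [CommSemiring S] [Algebra ℝ S] {e : Fin m}
    {P : MvPolynomial (Fin m) ℝ} (h : P.degreeOf e ≤ 1) (y : Fin m → S) (t : S) :
    aeval (Function.update y e t) P = aeval y (del e P) + t * aeval y (pderiv e P) := by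
  conv_lhs => rw [← del_add_X_mul_pderiv h]
  rw [map_add, map_mul, aeval_X, Function.update_self,
    aeval_update_of_degreeOf_eq_zero (degreeOf_del_self e P),
    aeval_update_of_degreeOf_eq_zero (degreeOf_pderiv_self_eq_zero h)]

theorem ray_eq_of_pderiv_eq_zero {e f : Fin m} (hef : e ≠ f) {a b c d : MvPolynomial (Fin m) ℝ}
    (ha : pderiv e a = 0 ∧ pderiv f a = 0) (hb : pderiv e b = 0 ∧ pderiv f b = 0)
    (hc : pderiv e c = 0 ∧ pderiv f c = 0) (hd : pderiv e d = 0 ∧ pderiv f d = 0) :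
    Ray e f (a + X e * b + X f * (c + X e * d)) = b * c - a * d := by
  simp only [Ray, map_add, pderiv_mul, pderiv_X_self, pderiv_X_of_ne hef, pderiv_X_of_ne hef.symm,
    map_zero, pderiv_one, ha, hb, hc, hd]
  ring

theorem ray_eq_of_degreeOf_le_one {e f : Fin m} (hef : e ≠ f) {Z : MvPolynomial (Fin m) ℝ}
    (he : Z.degreeOf e ≤ 1) (hf : Z.degreeOf f ≤ 1) :
    Ray e f Z =
      pderiv e (del f Z) * del e (pderiv f Z) - del e (del f Z) * pderiv e (pderiv f Z) := by
  have hPe : (del f Z).degreeOf e ≤ 1 := (degreeOf_del_le e f Z).trans he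
  have hQe : (pderiv f Z).degreeOf e ≤ 1 := (degreeOf_pderiv_le e f Z).trans he
  have hPf := degreeOf_del_self f Z
  have hQf := degreeOf_pderiv_self_eq_zero hf
  have hZ : Z = del e (del f Z) + X e * pderiv e (del f Z) +
      X f * (del e (pderiv f Z) + X e * pderiv e (pderiv f Z)) := by
    rw [del_add_X_mul_pderiv hPe, del_add_X_mul_pderiv hQe, del_add_X_mul_pderiv hf]
  conv_lhs => rw [hZ]
  refine ray_eq_of_pderiv_eq_zero hef ⟨?_, ?_⟩ ⟨?_, ?_⟩ ⟨?_, ?_⟩ ⟨?_, ?_⟩ <;>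
    refine pderiv_eq_zero_of_degreeOf_eq_zero (Nat.le_zero.mp ?_)
  · exact (degreeOf_del_self e _).le
  · exact (degreeOf_del_le f e _).trans hPf.le
  · exact (degreeOf_pderiv_self_eq_zero hPe).le
  · exact (degreeOf_pderiv_le f e _).trans hPf.le
  · exact (degreeOf_del_self e _).le
  · exact (degreeOf_del_le f e _).trans hQf.le
  · exact (degreeOf_pderiv_self_eq_zero hQe).le
  · exact (degreeOf_pderiv_le f e _).trans hQf.le

end Deletion

end MvPolynomial

open MvPolynomial Complex ComplexConjugate Filter Topology

theorem Continuous.nonneg_of_forall_im_pos {ι : Type*} {g : (ι → ℂ) → ℝ} (hg : Continuous g)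
    (h : ∀ u : ι → ℂ, (∀ j, 0 < (u j).im) → 0 ≤ g u) {u : ι → ℂ} (hu : ∀ j, 0 ≤ (u j).im) :
    0 ≤ g u := by
  have hcont : Continuous fun ε : ℝ => g fun j => u j + ε * I := by fun_prop
  have hlim : Tendsto (fun ε : ℝ => g fun j => u j + ε * I) (𝓝[>] 0) (𝓝 (g u)) := by
    simpa using (hcont.tendsto 0).mono_left nhdsWithin_le_nhds
  refine ge_of_tendsto hlim (eventually_nhdsWithin_of_forall fun ε (hε : 0 < ε) => h _ fun j => ?_)
  simpa using add_pos_of_nonneg_of_pos (hu j) hε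

section Stability

variable {m : ℕ}

theorem Stable.im_mul_conj_nonneg_of_im_pos {Z : MvPolynomial (Fin m) ℝ} (hZ : Stable Z)
    {f : Fin m} (hf : Z.degreeOf f ≤ 1) {u : Fin m → ℂ} (hu : ∀ j, 0 < (u j).im) :
    0 ≤ (aeval u (del f Z) * conj (aeval u (pderiv f Z))).im := by
  set P := aeval u (del f Z)
  set Q := aeval u (pderiv f Z)
  by_contra! hneg
  have hQ : Q ≠ 0 := by rintro hQ; simp [hQ] at hneg
  have hw : 0 < (-P / Q).im := by
    rw [div_eq_mul_inv, inv_def, ← mul_assoc, im_mul_ofReal, neg_mul, neg_im]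
    exact mul_pos (neg_pos.mpr hneg) (inv_pos.mpr (normSq_pos.mpr hQ))
  refine hZ (Function.update u f (-P / Q)) (fun j => ?_) ?_
  · rcases eq_or_ne j f with rfl | hj
    · simpa using hw
    · simpa [hj] using hu j
  · rw [eval_map, ← aeval_def, aeval_update_of_degreeOf_le_one hf, div_mul_cancel₀ _ hQ]
    ring

theorem Stable.im_mul_conj_nonneg {Z : MvPolynomial (Fin m) ℝ} (hZ : Stable Z)
    {f : Fin m} (hf : Z.degreeOf f ≤ 1) {u : Fin m → ℂ} (hu : ∀ j, 0 ≤ (u j).im) :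
    0 ≤ (aeval u (del f Z) * conj (aeval u (pderiv f Z))).im := by
  have hcont (P : MvPolynomial (Fin m) ℝ) : Continuous fun u : Fin m → ℂ => aeval u P := by
    simpa only [aeval_def, ← eval_map] using continuous_eval (map (algebraMap ℝ ℂ) P)
  exact Continuous.nonneg_of_forall_im_pos (by fun_prop)
    (fun _ hv => hZ.im_mul_conj_nonneg_of_im_pos hf hv) hu

end Stability

theorem stable_implies_strong_rayleigh {m : ℕ} (Z : MvPolynomial (Fin m) ℝ)
    (hZ : Multiaffine Z) (hstab : Stable Z) :
    ∀ e f : Fin m, e ≠ f → ∀ y : Fin m → ℝ, 0 ≤ eval y (Ray e f Z) := by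
  intro e f hef y
  have hu : ∀ j, 0 ≤ (Function.update (algebraMap ℝ ℂ ∘ y) e I j).im := fun j => by
    rcases eq_or_ne j e with rfl | hj <;> simp [*]
  have h := hstab.im_mul_conj_nonneg (hZ f) hu
  rw [aeval_update_of_degreeOf_le_one ((degreeOf_del_le e f Z).trans (hZ e)),
    aeval_update_of_degreeOf_le_one ((degreeOf_pderiv_le e f Z).trans (hZ e))] at h
  simp only [aeval_algebraMap_apply] at h
  rw [ray_eq_of_degreeOf_le_one hef (hZ e) (hZ f)]
  simpa using h
end
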